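/- arXiv:1907.05388 — 5 statements merged into one kernel-verified Lean document; each statement's English description precedes it below -/
import Mathlib

section
/- Let {φ_j}_{j≥1} be vectors in ℝ^d with ‖φ_j‖ ≤ 1 for all j, and let Λ₀ be a d×d positive definite matrix with smallest eigenvalue λ_min(Λ₀) ≥ 1. Define Λ_t = Λ₀ + Σ_{j=1}^t φ_j φ_jᵀ. Then log(det(Λ_t)/det(Λ₀)) ≤ Σ_{j=1}^t φ_jᵀ Λ_{j-1}^{-1} φ_j ≤ 2 log(det(Λ_t)/det(Λ₀)). -/
open Matrix Finset

lemma aux_vecMulVec_psd {d : ℕ} (u : Fin d → ℝ) : (Matrix.vecMulVec u u).PosSemidef := by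
  refine Matrix.posSemidef_iff_dotProduct_mulVec.mpr ⟨?_, ?_⟩
  · ext i j
    simp [Matrix.vecMulVec_apply, Matrix.conjTranspose_apply, mul_comm]
  · intro x
    have : star x ⬝ᵥ (Matrix.vecMulVec u u *ᵥ x) = (u ⬝ᵥ x) * (u ⬝ᵥ x) := by
      simp [dotProduct, Matrix.mulVec, Matrix.vecMulVec_apply, Finset.sum_mul,
        Finset.mul_sum]
      rw [Finset.sum_comm]
      apply Finset.sum_congr rfl
      intro i _
      apply Finset.sum_congr rfl
      intro j _
      ring
    rw [this]
    exact mul_self_nonneg _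

lemma aux_det_step {d : ℕ} (A : Matrix (Fin d) (Fin d) ℝ) (hA : A.PosDef)
    (u : Fin d → ℝ) :
    (A + Matrix.vecMulVec u u).det = A.det * (1 + u ⬝ᵥ (A⁻¹ *ᵥ u)) := by
  rw [Matrix.vecMulVec_eq Unit, Matrix.det_add_replicateCol_mul_replicateRow (isUnit_iff_ne_zero.mpr hA.det_pos.ne')]
  congr 1
  rw [Matrix.det_unique]
  simp only [Matrix.add_apply, Matrix.one_apply_eq, Matrix.mul_apply, Matrix.replicateRow_apply,
    Matrix.replicateCol_apply, dotProduct, Matrix.mulVec]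
  congr 1
  simp_rw [Finset.sum_mul, Finset.mul_sum]
  rw [Finset.sum_comm]
  apply Finset.sum_congr rfl
  intro i _
  apply Finset.sum_congr rfl
  intro j _
  ring

lemma aux_half_le_log (x : ℝ) (h0 : 0 ≤ x) (h1 : x ≤ 1) :
    x ≤ 2 * Real.log (1 + x) := by
  have h : 1 - x / 2 ≤ Real.exp (-(x / 2)) := by
    have := Real.add_one_le_exp (-(x / 2)); linarith
  have hp : (0 : ℝ) < Real.exp (x / 2) := Real.exp_pos _
  have key : Real.exp (x / 2) ≤ 1 + x := by
    have h2 : Real.exp (x / 2) * (1 - x / 2) ≤ 1 := by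
      have h3 := mul_le_mul_of_nonneg_left h hp.le
      rwa [← Real.exp_add, add_neg_cancel, Real.exp_zero] at h3
    nlinarith [mul_nonneg h0 (sub_nonneg.2 h1)]
  have := (Real.le_log_iff_exp_le (by linarith : (0:ℝ) < 1 + x)).mpr key
  linarith

theorem stmt_2 (d t : ℕ)
    (φ : ℕ → Fin d → ℝ)
    (hφ : ∀ j, Real.sqrt (φ j ⬝ᵥ φ j) ≤ 1)
    (Λ : ℕ → Matrix (Fin d) (Fin d) ℝ)
    (hΛ0 : (Λ 0).PosDef)
    (hmin : ∀ v : Fin d → ℝ, v ⬝ᵥ v ≤ v ⬝ᵥ (Λ 0 *ᵥ v))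
    (hΛ : ∀ s : ℕ, Λ s = Λ 0 + ∑ j ∈ Finset.Icc 1 s, Matrix.vecMulVec (φ j) (φ j)) :
    Real.log ((Λ t).det / (Λ 0).det) ≤
      ∑ j ∈ Finset.Icc 1 t, φ j ⬝ᵥ ((Λ (j - 1))⁻¹ *ᵥ φ j) ∧
    ∑ j ∈ Finset.Icc 1 t, φ j ⬝ᵥ ((Λ (j - 1))⁻¹ *ᵥ φ j) ≤
      2 * Real.log ((Λ t).det / (Λ 0).det) := by
  -- norms of φ
  have hφ1 : ∀ j, φ j ⬝ᵥ φ j ≤ 1 := by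
    intro j
    have h0 : (0:ℝ) ≤ φ j ⬝ᵥ φ j := (by simpa using dotProduct_self_star_nonneg (R := ℝ) _)
    nlinarith [hφ j, Real.sq_sqrt h0, Real.sqrt_nonneg (φ j ⬝ᵥ φ j)]
  -- every Λ s is posdef
  have hpd : ∀ s, (Λ s).PosDef := by
    intro s
    rw [hΛ s]
    refine hΛ0.add_posSemidef ?_
    induction (Finset.Icc 1 s) using Finset.induction with
    | empty => simpa using Matrix.PosSemidef.zero
    | insert _ _ hnot ih =>
      rw [Finset.sum_insert hnot]
      exact (aux_vecMulVec_psd _).add ih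
  -- quadratic form lower bound at every time
  have hmin' : ∀ s (v : Fin d → ℝ), v ⬝ᵥ v ≤ v ⬝ᵥ (Λ s *ᵥ v) := by
    intro s v
    rw [hΛ s, Matrix.add_mulVec, dotProduct_add]
    have h2 : 0 ≤ v ⬝ᵥ ((∑ j ∈ Finset.Icc 1 s, Matrix.vecMulVec (φ j) (φ j)) *ᵥ v) := by
      have := (by
        induction (Finset.Icc 1 s) using Finset.induction with
        | empty => simpa using Matrix.PosSemidef.zero
        | insert _ _ hnot ih =>
          rw [Finset.sum_insert hnot]
          exact (aux_vecMulVec_psd _).add ih :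
        (∑ j ∈ Finset.Icc 1 s, Matrix.vecMulVec (φ j) (φ j)).PosSemidef).dotProduct_mulVec_nonneg v
      simpa using this
    linarith [hmin v]
  -- abbreviation for the summands
  set x : ℕ → ℝ := fun j => φ j ⬝ᵥ ((Λ (j - 1))⁻¹ *ᵥ φ j) with hx
  -- x j is nonneg
  have hx0 : ∀ j, 0 ≤ x j := by
    intro j
    have := ((hpd (j-1)).posSemidef.inv).dotProduct_mulVec_nonneg (φ j)
    simpa [hx] using this
  -- x j ≤ 1
  have hx1 : ∀ j, x j ≤ 1 := by
    intro j
    set A := Λ (j - 1) with hA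
    set w : Fin d → ℝ := A⁻¹ *ᵥ φ j with hw
    have hAw : A *ᵥ w = φ j := by
      rw [hw, Matrix.mulVec_mulVec, Matrix.mul_nonsing_inv _ (isUnit_iff_ne_zero.mpr (hpd (j-1)).det_pos.ne'),
        Matrix.one_mulVec]
    have hxw : x j = φ j ⬝ᵥ w := rfl
    have h1 : w ⬝ᵥ (A *ᵥ w) = w ⬝ᵥ φ j := by rw [hAw]
    have h2 : w ⬝ᵥ w ≤ w ⬝ᵥ φ j := by rw [← h1]; exact hmin' _ w
    have h3 : 0 ≤ (w - φ j) ⬝ᵥ (w - φ j) := (by simpa using dotProduct_self_star_nonneg (w - φ j))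
    have h4 : (w - φ j) ⬝ᵥ (w - φ j)
        = w ⬝ᵥ w - 2 * (w ⬝ᵥ φ j) + φ j ⬝ᵥ φ j := by
      rw [sub_dotProduct, dotProduct_sub, dotProduct_sub, dotProduct_comm (φ j) w]
      ring
    have h5 : x j = w ⬝ᵥ φ j := by rw [hxw, dotProduct_comm]
    have := hφ1 j
    linarith
  -- telescoping identity
  have hdet : ∀ s, Real.log ((Λ s).det / (Λ 0).det)
      = ∑ j ∈ Finset.Icc 1 s, Real.log (1 + x j) := by
    intro s
    induction s with
    | zero => rw [div_self (hpd 0).det_pos.ne', Real.log_one]; simp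
    | succ n ih =>
      have hstep : Λ (n + 1) = Λ n + Matrix.vecMulVec (φ (n+1)) (φ (n+1)) := by
        rw [hΛ (n+1), hΛ n, Finset.sum_Icc_succ_top (Nat.le_add_left 1 n), ← add_assoc]
      rw [Finset.sum_Icc_succ_top (Nat.le_add_left 1 n), ← ih]
      have hxn : x (n+1) = φ (n+1) ⬝ᵥ ((Λ n)⁻¹ *ᵥ φ (n+1)) := by
        simp [hx]
      have hd := aux_det_step (Λ n) (hpd n) (φ (n+1))
      rw [hstep, hd, ← hxn]
      have hpos0 := (hpd 0).det_pos
      have hposn := (hpd n).det_pos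
      have h1x : (0:ℝ) < 1 + x (n+1) := by linarith [hx0 (n+1)]
      rw [show (Λ n).det * (1 + x (n+1)) / (Λ 0).det
          = ((Λ n).det / (Λ 0).det) * (1 + x (n+1)) from by ring,
        Real.log_mul (by positivity) h1x.ne']
  constructor
  · rw [hdet t]
    apply Finset.sum_le_sum
    intro j _
    have h1x : (0:ℝ) < 1 + x j := by linarith [hx0 j]
    have := Real.log_le_sub_one_of_pos h1x
    linarith
  · rw [hdet t, Finset.mul_sum]
    apply Finset.sum_le_sum
    intro j _
    exact aux_half_le_log (x j) (hx0 j) (hx1 j)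
end

section
/- Consider a finite-horizon linear MDP: finite state set S, finite action set A, horizon H, feature map φ: S × A → ℝ^d with ‖φ(x,a)‖ ≤ 1, signed measures μ_h = (μ_h^{(1)},…,μ_h^{(d)}) on S with ‖μ_h(S)‖ ≤ √d, vectors θ_h ∈ ℝ^d with ‖θ_h‖ ≤ √d, and transition kernels P_h(·|x,a) = ⟨φ(x,a), μ_h(·)⟩, rewards r_h(x,a) = ⟨φ(x,a), θ_h⟩ ∈ [0,1]. For any policy π: S × [H] → A, there exist weights w_h^π ∈ ℝ^d such that Q_h^π(x,a) = ⟨φ(x,a), w_h^π⟩ for all (x,a,h), where Q_h^π is the action-value function of π. -/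
open Matrix Finset

theorem dotProduct_add_sum_dotProduct_mul {R ι S : Type*} [CommSemiring R] [Fintype ι]
    [Fintype S] (v θ : ι → R) (μ : S → ι → R) (V : S → R) :
    v ⬝ᵥ θ + ∑ x, (v ⬝ᵥ μ x) * V x = v ⬝ᵥ (θ + ∑ x, V x • μ x) := by
  simp only [dotProduct_add, dotProduct_sum, dotProduct_smul, smul_eq_mul, mul_comm]

theorem stmt_9_general (S A : Type) [Fintype S] (d H : ℕ)
    (φ : S → A → Fin d → ℝ)
    (μ : ℕ → S → Fin d → ℝ)
    (θ : ℕ → Fin d → ℝ)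
    (P : ℕ → S → A → S → ℝ) (r : ℕ → S → A → ℝ)
    (hP : ∀ h x a x', P h x a x' = φ x a ⬝ᵥ μ h x')
    (hr : ∀ h x a, r h x a = φ x a ⬝ᵥ θ h)
    (π : S → ℕ → A)
    (Q : ℕ → S → A → ℝ)
    (hBellman : ∀ h ∈ Finset.Icc 1 H, ∀ x a,
      Q h x a = r h x a + ∑ x' : S, P h x a x' * Q (h + 1) x' (π x' (h + 1))) :
    ∀ h ∈ Finset.Icc 1 H, ∃ w : Fin d → ℝ, ∀ x a, Q h x a = φ x a ⬝ᵥ w := by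
  intro h hh
  refine ⟨θ h + ∑ x', Q (h + 1) x' (π x' (h + 1)) • μ h x', fun x a => ?_⟩
  simp only [hBellman h hh, hr, hP]
  exact dotProduct_add_sum_dotProduct_mul _ _ _ _

/-- In a linear MDP (finite states/actions, transitions and rewards linear in the
feature map), the action-value function of any policy is linear in the features. -/
theorem stmt_9 (S A : Type) [Fintype S] [Fintype A] (d H : ℕ)
    (φ : S → A → Fin d → ℝ)
    (hφ : ∀ x a, Real.sqrt (φ x a ⬝ᵥ φ x a) ≤ 1)
    (μ : ℕ → S → Fin d → ℝ)
    (hμ : ∀ h, Real.sqrt ((fun i => ∑ x' : S, μ h x' i) ⬝ᵥ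
      (fun i => ∑ x' : S, μ h x' i)) ≤ Real.sqrt d)
    (θ : ℕ → Fin d → ℝ)
    (hθ : ∀ h, Real.sqrt (θ h ⬝ᵥ θ h) ≤ Real.sqrt d)
    (P : ℕ → S → A → S → ℝ) (r : ℕ → S → A → ℝ)
    (hP : ∀ h x a x', P h x a x' = φ x a ⬝ᵥ μ h x')
    (hr : ∀ h x a, r h x a = φ x a ⬝ᵥ θ h)
    (hr01 : ∀ h x a, r h x a ∈ Set.Icc (0 : ℝ) 1)
    (π : S → ℕ → A)
    (Q : ℕ → S → A → ℝ)
    (hQend : ∀ x a, Q (H + 1) x a = 0)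
    (hBellman : ∀ h ∈ Finset.Icc 1 H, ∀ x a,
      Q h x a = r h x a + ∑ x' : S, P h x a x' * Q (h + 1) x' (π x' (h + 1))) :
    ∀ h ∈ Finset.Icc 1 H, ∃ w : Fin d → ℝ, ∀ x a, Q h x a = φ x a ⬝ᵥ w :=
  stmt_9_general S A d H φ μ θ P r hP hr π Q hBellman
end

section
/- Let S be a finite state set, A an action set, and φ: S × A → ℝ^d a feature map such that for every x ∈ S there exist actions a, ā with φ(x,a) ≠ φ(x,ā). Let Q = {Q : Q(·,·) = φ(·,·)ᵀ w, w ∈ ℝ^d} be the class of linear action-value functions, and for a policy π define (T_h^π Q)(x,a) = r_h(x,a) + Σ_{x'} P_h(x'|x,a) Q(x', π(x')). If T_h^π Q ⊆ Q for every policy π, then the transition kernel is linear in φ: there exists a map μ: S → ℝ^d with P_h(x₀|x,a) = ⟨φ(x,a), μ(x₀)⟩ for all x₀, x, a. -/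
open Matrix Finset

/-!
Two policies that differ only at the state `x₀` have Bellman backups whose difference is
`P(x₀ | x, a)` times the difference of the action values at `x₀`. Choosing the linear action value
`Q = φᵀ w₀` with `w₀` normalised so that this difference is `1`, closedness of the linear class
makes `P(x₀ | ·, ·)` a difference of two linear functions of `φ`.
-/

theorem Matrix.exists_dotProduct_eq_one {K n : Type*} [Field K] [Fintype n] {v : n → K}
    (hv : v ≠ 0) : ∃ w : n → K, v ⬝ᵥ w = 1 := by
  classical
  obtain ⟨i, hi⟩ := Function.ne_iff.mp hv
  exact ⟨Pi.single i (v i)⁻¹, by rw [dotProduct_single, mul_inv_cancel₀ hi]⟩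

section Bellman

variable {S A : Type} [Fintype S]

def bellmanBackup (r : S → A → ℝ) (P : S → A → S → ℝ) (π : S → A) (Q : S → A → ℝ)
    (x : S) (a : A) : ℝ :=
  r x a + ∑ x' : S, P x a x' * Q x' (π x')

theorem bellmanBackup_update_sub [DecidableEq S] (r : S → A → ℝ) (P : S → A → S → ℝ)
    (π : S → A) (Q : S → A → ℝ) (x₀ : S) (a₀ : A) (x : S) (a : A) :
    bellmanBackup r P (Function.update π x₀ a₀) Q x a - bellmanBackup r P π Q x a =
      P x a x₀ * (Q x₀ a₀ - Q x₀ (π x₀)) := by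
  rw [bellmanBackup, bellmanBackup, add_sub_add_left_eq_sub, ← sum_sub_distrib,
    sum_eq_single x₀ (fun x' _ hx' => by simp [hx']) (by simp)]
  simp [mul_sub]

theorem exists_transition_eq_dotProduct_of_bellmanBackup_linear {d : ℕ}
    (φ : S → A → Fin d → ℝ) (P : S → A → S → ℝ) (r : S → A → ℝ)
    (hclosed : ∀ π : S → A, ∀ w : Fin d → ℝ, ∃ w' : Fin d → ℝ,
      ∀ x a, bellmanBackup r P π (fun x a => φ x a ⬝ᵥ w) x a = φ x a ⬝ᵥ w')
    {x₀ : S} {a₀ a₁ : A} (hne : φ x₀ a₀ ≠ φ x₀ a₁) :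
    ∃ μ : Fin d → ℝ, ∀ x a, P x a x₀ = φ x a ⬝ᵥ μ := by
  classical
  obtain ⟨w₀, hw₀⟩ := exists_dotProduct_eq_one (sub_ne_zero.mpr hne)
  let π : S → A := fun _ => a₁
  obtain ⟨w₁, h₁⟩ := hclosed (Function.update π x₀ a₀) w₀
  obtain ⟨w₂, h₂⟩ := hclosed π w₀
  refine ⟨w₁ - w₂, fun x a => ?_⟩
  calc P x a x₀ = P x a x₀ * ((φ x₀ a₀ - φ x₀ a₁) ⬝ᵥ w₀) := by rw [hw₀, mul_one]
    _ = bellmanBackup r P (Function.update π x₀ a₀) (fun x a => φ x a ⬝ᵥ w₀) x a -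
          bellmanBackup r P π (fun x a => φ x a ⬝ᵥ w₀) x a := by
      rw [bellmanBackup_update_sub, sub_dotProduct]
    _ = φ x a ⬝ᵥ (w₁ - w₂) := by rw [h₁, h₂, dotProduct_sub]

end Bellman

theorem stmt_12_general (S A : Type) [Fintype S] (d : ℕ)
    (φ : S → A → Fin d → ℝ)
    (hφ : ∀ x : S, ∃ a abar : A, φ x a ≠ φ x abar)
    (P : S → A → S → ℝ)
    (r : S → A → ℝ)
    (hclosed : ∀ π : S → A, ∀ w : Fin d → ℝ, ∃ w' : Fin d → ℝ,
      ∀ x a, r x a + ∑ x' : S, P x a x' * (φ x' (π x') ⬝ᵥ w) = φ x a ⬝ᵥ w') :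
    ∃ μ : S → Fin d → ℝ, ∀ x₀ x a, P x a x₀ = φ x a ⬝ᵥ μ x₀ := by
  choose a₀ a₁ hne using hφ
  choose μ hμ using fun x₀ =>
    exists_transition_eq_dotProduct_of_bellmanBackup_linear φ P r hclosed (hne x₀)
  exact ⟨μ, hμ⟩

/-- If the class of linear action-value functions is closed under the Bellman
operator of every policy, then the transition kernel must be linear in the
feature map. -/
theorem stmt_12 (S A : Type) [Fintype S] (d : ℕ)
    (φ : S → A → Fin d → ℝ)
    (hφ : ∀ x : S, ∃ a abar : A, φ x a ≠ φ x abar)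
    (P : S → A → S → ℝ)
    (hPpos : ∀ x a x', 0 ≤ P x a x')
    (hPsum : ∀ x a, ∑ x' : S, P x a x' = 1)
    (r : S → A → ℝ)
    (hclosed : ∀ π : S → A, ∀ w : Fin d → ℝ, ∃ w' : Fin d → ℝ,
      ∀ x a, r x a + ∑ x' : S, P x a x' * (φ x' (π x') ⬝ᵥ w) = φ x a ⬝ᵥ w') :
    ∃ μ : S → Fin d → ℝ, ∀ x₀ x a, P x a x₀ = φ x a ⬝ᵥ μ x₀ :=
  stmt_12_general S A d φ hφ P r hclosed
end

section
/- Let V be the class of functions V(x) = min{ max_{a} [wᵀ φ(x,a) + β √(φ(x,a)ᵀ Λ^{-1} φ(x,a))], H } with ‖w‖ ≤ L, β ∈ [0, B], λ_min(Λ) ≥ λ > 0, and ‖φ(x,a)‖ ≤ 1 for all (x,a), with a ranging over a finite action set. Then the ε-covering number N_ε of V with respect to the sup distance dist(V,V') = sup_x |V(x) − V'(x)| satisfies log N_ε ≤ d log(1 + 4L/ε) + d² log(1 + 8 d^{1/2} B²/(λ ε²)). -/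
open Matrix Finset


open Metric MeasureTheory

lemma sqrt_sub_sqrt_le' (a b : ℝ) : Real.sqrt a - Real.sqrt b ≤ Real.sqrt |a - b| := by
  rcases le_total a b with h | h
  · have h1 := Real.sqrt_le_sqrt h
    have h2 := Real.sqrt_nonneg |a - b|
    linarith
  · have h1 : Real.sqrt a ≤ Real.sqrt b + Real.sqrt (a - b) := by
      rcases le_total b 0 with hb | hb
      · have h2 : a ≤ a - b := by linarith
        have h3 := Real.sqrt_le_sqrt h2
        have h4 := Real.sqrt_nonneg b
        linarith
      · have key : a ≤ (Real.sqrt b + Real.sqrt (a - b)) ^ 2 := by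
          have hb' := Real.sq_sqrt hb
          have hab := Real.sq_sqrt (by linarith : (0:ℝ) ≤ a - b)
          have h5 := Real.sqrt_nonneg b
          have h6 := Real.sqrt_nonneg (a - b)
          nlinarith
        calc Real.sqrt a ≤ Real.sqrt ((Real.sqrt b + Real.sqrt (a - b)) ^ 2) :=
              Real.sqrt_le_sqrt key
          _ = _ := Real.sqrt_sq (by positivity)
    rw [abs_of_nonneg (by linarith)]
    linarith

lemma abs_sqrt_sub_sqrt (a b : ℝ) : |Real.sqrt a - Real.sqrt b| ≤ Real.sqrt |a - b| := by
  refine abs_sub_le_iff.2 ⟨sqrt_sub_sqrt_le' a b, ?_⟩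
  rw [abs_sub_comm]
  exact sqrt_sub_sqrt_le' b a

lemma abs_sum_mul_le {ι : Type*} [Fintype ι] (f g : ι → ℝ) :
    |∑ i, f i * g i| ≤ Real.sqrt (∑ i, f i ^ 2) * Real.sqrt (∑ i, g i ^ 2) := by
  rw [← Real.sqrt_sq_eq_abs, ← Real.sqrt_mul (Finset.sum_nonneg fun i _ => sq_nonneg _)]
  exact Real.sqrt_le_sqrt (Finset.sum_mul_sq_le_sq_mul_sq _ _ _)

lemma abs_min_sub_min (a b c : ℝ) : |min a c - min b c| ≤ |a - b| := by
  have key : ∀ x y : ℝ, min x c - min y c ≤ |x - y| := by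
    intro x y
    have h1 : x ≤ y + |x - y| := by
      have := le_abs_self (x - y); linarith
    have h2 : min x c ≤ min (y + |x - y|) (c + |x - y|) :=
      min_le_min h1 (le_add_of_nonneg_right (abs_nonneg _))
    rw [min_add_add_right] at h2
    linarith [h2]
  refine abs_sub_le_iff.2 ⟨key a b, ?_⟩
  rw [abs_sub_comm]
  exact key b a

lemma abs_sup'_sub_sup' {α : Type*} [Fintype α] [Nonempty α] (f g : α → ℝ) (c : ℝ)
    (h : ∀ a, |f a - g a| ≤ c) :
    |Finset.univ.sup' Finset.univ_nonempty f - Finset.univ.sup' Finset.univ_nonempty g| ≤ c := by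
  rw [abs_sub_le_iff]
  constructor
  · rw [sub_le_iff_le_add]
    apply Finset.sup'_le
    intro a _
    have h1 := (abs_le.1 (h a)).2
    have hg := Finset.le_sup' g (Finset.mem_univ a)
    calc f a ≤ g a + c := by linarith [abs_le.1 (h a)]
      _ ≤ _ := by linarith [Finset.le_sup' g (Finset.mem_univ a)]
  · rw [sub_le_iff_le_add]
    apply Finset.sup'_le
    intro a _
    calc g a ≤ f a + c := by linarith [abs_le.1 (h a)]
      _ ≤ _ := by linarith [Finset.le_sup' f (Finset.mem_univ a)]


open Metric MeasureTheory
open scoped ENNReal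

lemma euclid_net (ι : Type) [Fintype ι] (R δ : ℝ) (hR : 0 ≤ R) (hδ : 0 < δ) :
    ∃ S : Finset (EuclideanSpace ℝ ι),
      (∀ x ∈ closedBall (0 : EuclideanSpace ℝ ι) R, ∃ s ∈ S, dist x s ≤ δ) ∧
      (S.card : ℝ) ≤ (1 + 2 * R / δ) ^ (Fintype.card ι) := by
  classical
  set E := EuclideanSpace ℝ ι
  set n := Fintype.card ι
  set P : Set (Set E) := {s | s ⊆ closedBall 0 R ∧ s.Pairwise fun a b => δ < dist a b} with hP
  obtain ⟨M, hM⟩ : ∃ m, Maximal (· ∈ P) m := by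
    apply zorn_subset
    intro c hc hchain
    refine ⟨⋃₀ c, ⟨?_, ?_⟩, fun s hs => Set.subset_sUnion_of_mem hs⟩
    · exact Set.sUnion_subset fun s hs => (hc hs).1
    · intro a ha b hb hab
      obtain ⟨s, hs, has⟩ := ha
      obtain ⟨t, ht, hbt⟩ := hb
      rcases hchain.total hs ht with h | h
      · exact (hc ht).2 (h has) hbt hab
      · exact (hc hs).2 has (h hbt) hab
  -- key counting bound for finite subsets of M
  have key : ∀ t : Finset E, ↑t ⊆ M → (t.card : ℝ) ≤ (1 + 2 * R / δ) ^ n := by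
    intro t ht
    have hdisj : (↑t : Set E).PairwiseDisjoint fun m => closedBall m (δ / 2) := by
      intro a ha b hb hab
      apply closedBall_disjoint_closedBall
      have := hM.1.2 (ht ha) (ht hb) hab
      linarith
    have hmeas : volume (⋃ m ∈ t, closedBall m (δ / 2)) =
        ∑ m ∈ t, volume (closedBall m (δ / 2)) :=
      measure_biUnion_finset hdisj fun m _ => measurableSet_closedBall
    have hsub : (⋃ m ∈ t, closedBall m (δ / 2)) ⊆ closedBall (0 : E) (R + δ / 2) := by
      intro x hx
      simp only [Set.mem_iUnion] at hx
      obtain ⟨m, hm, hxm⟩ := hx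
      have h1 : dist m 0 ≤ R := mem_closedBall.1 (hM.1.1 (ht hm))
      have h2 : dist x m ≤ δ / 2 := mem_closedBall.1 hxm
      have := dist_triangle x m 0
      simp only [mem_closedBall]
      linarith
    have hvol : ∀ m : E, volume (closedBall m (δ / 2)) =
        ENNReal.ofReal ((δ / 2) ^ n) * volume (ball (0 : E) 1) := by
      intro m
      rw [Measure.addHaar_closedBall volume m (by linarith : (0:ℝ) ≤ δ / 2)]
      congr 2
      rw [finrank_euclideanSpace]
    have hbig : volume (closedBall (0 : E) (R + δ / 2)) =
        ENNReal.ofReal ((R + δ / 2) ^ n) * volume (ball (0 : E) 1) := by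
      rw [Measure.addHaar_closedBall volume 0 (by linarith : (0:ℝ) ≤ R + δ / 2)]
      congr 2
      rw [finrank_euclideanSpace]
    have hu0 : volume (ball (0 : E) 1) ≠ 0 := (measure_ball_pos volume 0 one_pos).ne'
    have hut : volume (ball (0 : E) 1) ≠ ⊤ := measure_ball_lt_top.ne
    have hchain2 : (t.card : ℝ≥0∞) * (ENNReal.ofReal ((δ / 2) ^ n) * volume (ball (0 : E) 1))
        ≤ ENNReal.ofReal ((R + δ / 2) ^ n) * volume (ball (0 : E) 1) := by
      calc (t.card : ℝ≥0∞) * (ENNReal.ofReal ((δ / 2) ^ n) * volume (ball (0 : E) 1))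
          = ∑ m ∈ t, volume (closedBall m (δ / 2)) := by
            rw [Finset.sum_congr rfl fun m _ => hvol m, Finset.sum_const, nsmul_eq_mul]
        _ = volume (⋃ m ∈ t, closedBall m (δ / 2)) := hmeas.symm
        _ ≤ volume (closedBall (0 : E) (R + δ / 2)) := measure_mono hsub
        _ = _ := hbig
    rw [← mul_assoc] at hchain2
    have hchain3 := (ENNReal.mul_le_mul_iff_left hu0 hut).1 hchain2
    have hreal : (t.card : ℝ) * ((δ / 2) ^ n) ≤ (R + δ / 2) ^ n := by
      have := hchain3
      rw [← ENNReal.ofReal_natCast, ← ENNReal.ofReal_mul (by positivity)] at this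
      exact (ENNReal.ofReal_le_ofReal_iff (by positivity)).1 this
    have hpow : (0:ℝ) < (δ / 2) ^ n := by positivity
    rw [← le_div_iff₀ hpow] at hreal
    calc (t.card : ℝ) ≤ (R + δ / 2) ^ n / (δ / 2) ^ n := hreal
      _ = ((R + δ / 2) / (δ / 2)) ^ n := by rw [← div_pow]
      _ = (1 + 2 * R / δ) ^ n := by
          congr 1
          field_simp
          ring
  -- M is finite
  have hMfin : M.Finite := by
    by_contra hinf
    obtain ⟨t, htM, htcard⟩ := Set.Infinite.exists_subset_card_eq hinf
      (⌊(1 + 2 * R / δ) ^ n⌋₊ + 1)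
    have h1 := key t htM
    rw [htcard] at h1
    have h2 : (1 + 2 * R / δ) ^ n < ((⌊(1 + 2 * R / δ) ^ n⌋₊ + 1 : ℕ) : ℝ) := by
      push_cast
      exact Nat.lt_floor_add_one _
    linarith
  refine ⟨hMfin.toFinset, ?_, ?_⟩
  · intro x hx
    by_contra hcon
    push_neg at hcon
    have hxM : ∀ s ∈ M, δ < dist x s := by
      intro s hs
      have := hcon s (hMfin.mem_toFinset.2 hs)
      linarith
    have hxnot : x ∉ M := fun h => absurd (hxM x h) (by simp [hδ.le])
    have hins : insert x M ∈ P := by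
      constructor
      · exact Set.insert_subset hx hM.1.1
      · apply Set.Pairwise.insert hM.1.2
        intro b hb hxb
        constructor
        · exact hxM b hb
        · rw [dist_comm]; exact hxM b hb
    have := hM.2 hins (Set.subset_insert x M)
    exact hxnot (this (Set.mem_insert x M))
  · have := key hMfin.toFinset (by simp)
    simpa using this


/-- Covering number bound for the class of optimistic value functions
`V(x) = min{ max_a [wᵀφ(x,a) + β √(φ(x,a)ᵀ Λ⁻¹ φ(x,a))], H }`. -/
theorem stmt_15 (X A : Type) [Fintype A] [Nonempty A] (d : ℕ)
    (φ : X → A → Fin d → ℝ)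
    (hφ : ∀ x a, Real.sqrt (φ x a ⬝ᵥ φ x a) ≤ 1)
    (H L B lam ε : ℝ) (hL : 0 < L) (hB : 0 < B) (hlam : 0 < lam) (hε : 0 < ε) :
    ∃ C : Finset (X → ℝ),
      (∀ (w : Fin d → ℝ) (β : ℝ) (Λ : Matrix (Fin d) (Fin d) ℝ),
        Real.sqrt (w ⬝ᵥ w) ≤ L → β ∈ Set.Icc 0 B → Λ.PosDef →
        (∀ v : Fin d → ℝ, lam * (v ⬝ᵥ v) ≤ v ⬝ᵥ (Λ *ᵥ v)) →
        ∀ V : X → ℝ,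
          (∀ x, V x = min (Finset.univ.sup' Finset.univ_nonempty
            (fun a => w ⬝ᵥ φ x a + β * Real.sqrt (φ x a ⬝ᵥ (Λ⁻¹ *ᵥ φ x a)))) H) →
          ∃ f ∈ C, ∀ x, |V x - f x| ≤ ε) ∧
      Real.log (C.card) ≤ d * Real.log (1 + 4 * L / ε) +
        d ^ 2 * Real.log (1 + 8 * Real.sqrt d * B ^ 2 / (lam * ε ^ 2)) := by
  classical
  obtain ⟨S1, hS1cov, hS1card⟩ := euclid_net (Fin d) L (ε / 2) hL.le (by positivity)
  obtain ⟨S2, hS2cov, hS2card⟩ :=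
    euclid_net (Fin d × Fin d) (Real.sqrt d * B ^ 2 / lam) (ε ^ 2 / 4)
      (by positivity) (by positivity)
  set C : Finset (X → ℝ) := (S1 ×ˢ S2).image (fun pr (x : X) =>
    min (Finset.univ.sup' Finset.univ_nonempty
      (fun a => (∑ i, pr.1 i * φ x a i) +
        Real.sqrt (∑ p : Fin d × Fin d, pr.2 p * (φ x a p.1 * φ x a p.2)))) H) with hC
  have dotself : ∀ {k : Type} [Fintype k] (v : k → ℝ), 0 ≤ v ⬝ᵥ v := by
    intro k _ v
    exact Finset.sum_nonneg fun i _ => mul_self_nonneg _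
  have CS : ∀ (u v : Fin d → ℝ), u ⬝ᵥ v ≤ Real.sqrt (u ⬝ᵥ u) * Real.sqrt (v ⬝ᵥ v) := by
    intro u v
    have e1 : ∀ (z : Fin d → ℝ), (z ⬝ᵥ z) = ∑ i, z i ^ 2 := by
      intro z; simp [dotProduct, sq]
    rw [e1, e1]
    calc u ⬝ᵥ v ≤ |∑ i, u i * v i| := le_abs_self _
      _ ≤ _ := abs_sum_mul_le u v
  refine ⟨C, ?_, ?_⟩
  · intro w β Λ hw hβ hΛ hlamΛ V hV
    have hdet : IsUnit Λ.det := isUnit_iff_ne_zero.2 hΛ.det_pos.ne'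
    have hΛinv : ∀ v : Fin d → ℝ, Λ *ᵥ (Λ⁻¹ *ᵥ v) = v := by
      intro v
      rw [mulVec_mulVec, mul_nonsing_inv _ hdet, one_mulVec]
    have hinvnorm : ∀ v : Fin d → ℝ,
        Real.sqrt ((Λ⁻¹ *ᵥ v) ⬝ᵥ (Λ⁻¹ *ᵥ v)) ≤ Real.sqrt (v ⬝ᵥ v) / lam := by
      intro v
      set u := Λ⁻¹ *ᵥ v with hu
      have h1 : lam * (u ⬝ᵥ u) ≤ u ⬝ᵥ v := by
        have h2 := hlamΛ u
        rwa [hΛinv v] at h2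
      have h3 : u ⬝ᵥ v ≤ Real.sqrt (u ⬝ᵥ u) * Real.sqrt (v ⬝ᵥ v) := CS u v
      have h4 : Real.sqrt (u ⬝ᵥ u) ^ 2 = u ⬝ᵥ u := Real.sq_sqrt (dotself u)
      rcases eq_or_lt_of_le (Real.sqrt_nonneg (u ⬝ᵥ u)) with h5 | h5
      · rw [← h5]; positivity
      · rw [le_div_iff₀ hlam]
        nlinarith [Real.sqrt_nonneg (v ⬝ᵥ v)]
    have hq0 : ∀ v : Fin d → ℝ, 0 ≤ v ⬝ᵥ (Λ⁻¹ *ᵥ v) := by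
      intro v
      have h1 : lam * ((Λ⁻¹ *ᵥ v) ⬝ᵥ (Λ⁻¹ *ᵥ v)) ≤ (Λ⁻¹ *ᵥ v) ⬝ᵥ v := by
        have h2 := hlamΛ (Λ⁻¹ *ᵥ v)
        rwa [hΛinv v] at h2
      have h3 := dotself (Λ⁻¹ *ᵥ v)
      rw [dotProduct_comm]
      nlinarith
    have hcol : ∀ j : Fin d, (∑ i, (Λ⁻¹ i j) ^ 2) ≤ 1 / lam ^ 2 := by
      intro j
      have h1 := hinvnorm (Pi.single j 1)
      have h2 : Λ⁻¹ *ᵥ Pi.single j 1 = fun i => Λ⁻¹ i j := by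
        rw [mulVec_single]; simp; rfl
      have h3 : (Pi.single j 1 : Fin d → ℝ) ⬝ᵥ Pi.single j 1 = 1 := by
        rw [single_dotProduct]; simp
      rw [h2, h3, Real.sqrt_one] at h1
      have h4 : ((fun i => Λ⁻¹ i j) ⬝ᵥ fun i => Λ⁻¹ i j) = ∑ i, (Λ⁻¹ i j) ^ 2 := by
        simp [dotProduct, sq]
      rw [h4] at h1
      have h5 : (0:ℝ) ≤ ∑ i, (Λ⁻¹ i j) ^ 2 := Finset.sum_nonneg fun i _ => sq_nonneg _
      calc (∑ i, (Λ⁻¹ i j) ^ 2) = Real.sqrt (∑ i, (Λ⁻¹ i j) ^ 2) ^ 2 :=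
            (Real.sq_sqrt h5).symm
        _ ≤ (1 / lam) ^ 2 := pow_le_pow_left₀ (Real.sqrt_nonneg _) h1 2
        _ = 1 / lam ^ 2 := by rw [div_pow, one_pow]
    set AE : EuclideanSpace ℝ (Fin d × Fin d) := WithLp.toLp 2 (fun p : Fin d × Fin d => β ^ 2 * Λ⁻¹ p.1 p.2) with hAE
    have hAEnorm : ‖AE‖ ≤ Real.sqrt d * B ^ 2 / lam := by
      rw [EuclideanSpace.norm_eq]
      have h1 : ∑ p : Fin d × Fin d, ‖AE p‖ ^ 2
          = β ^ 4 * ∑ p : Fin d × Fin d, (Λ⁻¹ p.1 p.2) ^ 2 := by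
        rw [Finset.mul_sum]
        apply Finset.sum_congr rfl
        intro p _
        rw [Real.norm_eq_abs, sq_abs, hAE]
        ring
      have h2 : ∑ p : Fin d × Fin d, (Λ⁻¹ p.1 p.2) ^ 2 ≤ d / lam ^ 2 := by
        rw [Fintype.sum_prod_type, Finset.sum_comm]
        calc ∑ j, ∑ i, (Λ⁻¹ i j) ^ 2 ≤ ∑ _j : Fin d, 1 / lam ^ 2 :=
              Finset.sum_le_sum fun j _ => hcol j
          _ = d / lam ^ 2 := by
              rw [Finset.sum_const, Finset.card_univ, Fintype.card_fin, nsmul_eq_mul]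
              ring
      calc Real.sqrt (∑ p : Fin d × Fin d, ‖AE p‖ ^ 2)
          = Real.sqrt (β ^ 4 * ∑ p : Fin d × Fin d, (Λ⁻¹ p.1 p.2) ^ 2) := by rw [h1]
        _ ≤ Real.sqrt (β ^ 4 * (d / lam ^ 2)) :=
            Real.sqrt_le_sqrt (mul_le_mul_of_nonneg_left h2 (by positivity))
        _ = β ^ 2 * (Real.sqrt d / lam) := by
            rw [Real.sqrt_mul (by positivity), Real.sqrt_div (by positivity),
              Real.sqrt_sq hlam.le]
            congr 1
            rw [show β ^ 4 = (β ^ 2) ^ 2 by ring, Real.sqrt_sq (sq_nonneg β)]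
        _ ≤ B ^ 2 * (Real.sqrt d / lam) := by
            have hβ2 : β ^ 2 ≤ B ^ 2 := pow_le_pow_left₀ hβ.1 hβ.2 2
            have : (0:ℝ) ≤ Real.sqrt d / lam := by positivity
            exact mul_le_mul_of_nonneg_right hβ2 this
        _ = Real.sqrt d * B ^ 2 / lam := by ring
    have hwE : (WithLp.toLp 2 w : EuclideanSpace ℝ (Fin d)) ∈ Metric.closedBall 0 L := by
      rw [mem_closedBall_zero_iff, EuclideanSpace.norm_eq]
      have h1 : ∑ i, ‖w i‖ ^ 2 = w ⬝ᵥ w := by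
        simp [dotProduct, Real.norm_eq_abs, sq_abs, sq]
      rw [h1]; exact hw
    obtain ⟨s1, hs1S, hs1⟩ := hS1cov _ hwE
    obtain ⟨s2, hs2S, hs2⟩ := hS2cov AE (mem_closedBall_zero_iff.2 hAEnorm)
    refine ⟨_, Finset.mem_image_of_mem _ (show (s1, s2) ∈ S1 ×ˢ S2 from Finset.mem_product.2 ⟨hs1S, hs2S⟩), ?_⟩
    intro x
    rw [hV x]
    refine le_trans (abs_min_sub_min _ _ H) ?_
    refine abs_sup'_sub_sup' _ _ ε ?_
    intro a
    set v : Fin d → ℝ := φ x a with hv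
    have hv1 : v ⬝ᵥ v ≤ 1 := by
      nlinarith [hφ x a, Real.sq_sqrt (dotself v), Real.sqrt_nonneg (v ⬝ᵥ v)]
    have term1 : |w ⬝ᵥ v - ∑ i, s1 i * v i| ≤ ε / 2 := by
      have h1 : w ⬝ᵥ v - ∑ i, s1 i * v i = ∑ i, (w i - s1 i) * v i := by
        simp only [dotProduct, ← Finset.sum_sub_distrib]
        exact Finset.sum_congr rfl fun i _ => by ring
      rw [h1]
      have h2 := abs_sum_mul_le (fun i => w i - s1 i) v
      have h3 : Real.sqrt (∑ i, (w i - s1 i) ^ 2) ≤ ε / 2 := by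
        have hd := hs1
        rw [EuclideanSpace.dist_eq] at hd
        convert hd using 3 with i
        rw [Real.dist_eq, sq_abs]
      have h4 : Real.sqrt (∑ i, v i ^ 2) ≤ 1 := by
        rw [show (∑ i, v i ^ 2) = v ⬝ᵥ v by simp [dotProduct, sq]]
        calc Real.sqrt (v ⬝ᵥ v) ≤ Real.sqrt 1 := Real.sqrt_le_sqrt hv1
          _ = 1 := Real.sqrt_one
      calc |∑ i, (w i - s1 i) * v i| ≤ _ := h2
        _ ≤ (ε / 2) * 1 := by
            apply mul_le_mul h3 h4 (Real.sqrt_nonneg _) (by positivity)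
        _ = ε / 2 := by ring
    have hq : ∑ p : Fin d × Fin d, AE p * (v p.1 * v p.2)
        = β ^ 2 * (v ⬝ᵥ (Λ⁻¹ *ᵥ v)) := by
      simp only [hAE]
      rw [Fintype.sum_prod_type]
      simp only [dotProduct, mulVec]
      rw [Finset.mul_sum]
      apply Finset.sum_congr rfl
      intro i _
      rw [Finset.mul_sum, Finset.mul_sum]
      apply Finset.sum_congr rfl
      intro j _
      ring
    have hsqeq : β * Real.sqrt (v ⬝ᵥ (Λ⁻¹ *ᵥ v))
        = Real.sqrt (∑ p : Fin d × Fin d, AE p * (v p.1 * v p.2)) := by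
      rw [hq, Real.sqrt_mul (sq_nonneg β), Real.sqrt_sq_eq_abs, abs_of_nonneg hβ.1]
    have term2 : |β * Real.sqrt (v ⬝ᵥ (Λ⁻¹ *ᵥ v))
        - Real.sqrt (∑ p : Fin d × Fin d, s2 p * (v p.1 * v p.2))| ≤ ε / 2 := by
      rw [hsqeq]
      refine le_trans (abs_sqrt_sub_sqrt _ _) ?_
      have h1 : |(∑ p : Fin d × Fin d, AE p * (v p.1 * v p.2))
          - ∑ p : Fin d × Fin d, s2 p * (v p.1 * v p.2)| ≤ ε ^ 2 / 4 := by
        have h2 : (∑ p : Fin d × Fin d, AE p * (v p.1 * v p.2))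
            - ∑ p : Fin d × Fin d, s2 p * (v p.1 * v p.2)
            = ∑ p : Fin d × Fin d, (AE p - s2 p) * (v p.1 * v p.2) := by
          rw [← Finset.sum_sub_distrib]
          apply Finset.sum_congr rfl
          intro p _
          ring
        rw [h2]
        have h3 := abs_sum_mul_le (fun p : Fin d × Fin d => AE p - s2 p)
          (fun p : Fin d × Fin d => v p.1 * v p.2)
        have h4 : Real.sqrt (∑ p : Fin d × Fin d, (AE p - s2 p) ^ 2) ≤ ε ^ 2 / 4 := by
          have hd := hs2
          rw [EuclideanSpace.dist_eq] at hd
          convert hd using 3 with p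
          rw [Real.dist_eq, sq_abs]
        have h5 : Real.sqrt (∑ p : Fin d × Fin d, (v p.1 * v p.2) ^ 2) ≤ 1 := by
          have h6 : ∑ p : Fin d × Fin d, (v p.1 * v p.2) ^ 2 = (v ⬝ᵥ v) ^ 2 := by
            rw [show (v ⬝ᵥ v) = ∑ i, v i ^ 2 by simp [dotProduct, sq]]
            rw [Fintype.sum_prod_type, pow_two, Finset.sum_mul_sum]
            exact Finset.sum_congr rfl fun i _ => Finset.sum_congr rfl fun j _ => by ring
          rw [h6, Real.sqrt_sq (dotself v)]
          exact hv1
        calc |∑ p : Fin d × Fin d, (AE p - s2 p) * (v p.1 * v p.2)| ≤ _ := h3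
          _ ≤ (ε ^ 2 / 4) * 1 := by
              apply mul_le_mul h4 h5 (Real.sqrt_nonneg _) (by positivity)
          _ = ε ^ 2 / 4 := by ring
      calc Real.sqrt |(∑ p : Fin d × Fin d, AE p * (v p.1 * v p.2))
            - ∑ p : Fin d × Fin d, s2 p * (v p.1 * v p.2)|
          ≤ Real.sqrt (ε ^ 2 / 4) := Real.sqrt_le_sqrt h1
        _ = ε / 2 := by
            rw [show ε ^ 2 / 4 = (ε / 2) ^ 2 by ring, Real.sqrt_sq (by positivity)]
    calc |w ⬝ᵥ v + β * Real.sqrt (v ⬝ᵥ (Λ⁻¹ *ᵥ v))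
          - ((∑ i, s1 i * v i) + Real.sqrt (∑ p : Fin d × Fin d, s2 p * (v p.1 * v p.2)))|
        = |(w ⬝ᵥ v - ∑ i, s1 i * v i) + (β * Real.sqrt (v ⬝ᵥ (Λ⁻¹ *ᵥ v))
            - Real.sqrt (∑ p : Fin d × Fin d, s2 p * (v p.1 * v p.2)))| := by ring_nf
      _ ≤ |w ⬝ᵥ v - ∑ i, s1 i * v i| + |β * Real.sqrt (v ⬝ᵥ (Λ⁻¹ *ᵥ v))
            - Real.sqrt (∑ p : Fin d × Fin d, s2 p * (v p.1 * v p.2))| := abs_add_le _ _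
      _ ≤ ε / 2 + ε / 2 := add_le_add term1 term2
      _ = ε := by ring
  · have hcard : (C.card : ℝ) ≤ (S1.card : ℝ) * (S2.card : ℝ) := by
      have h1 : C.card ≤ S1.card * S2.card := by
        calc C.card ≤ (S1 ×ˢ S2).card := Finset.card_image_le
          _ = S1.card * S2.card := Finset.card_product _ _
      exact_mod_cast h1
    set b1 : ℝ := 1 + 4 * L / ε with hb1def
    set b2 : ℝ := 1 + 8 * Real.sqrt d * B ^ 2 / (lam * ε ^ 2) with hb2def
    have hb1 : 1 ≤ b1 := by
      rw [hb1def]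
      have : (0:ℝ) ≤ 4 * L / ε := by positivity
      linarith
    have hb2 : 1 ≤ b2 := by
      rw [hb2def]
      have : (0:ℝ) ≤ 8 * Real.sqrt d * B ^ 2 / (lam * ε ^ 2) := by positivity
      linarith
    have hS1' : (S1.card : ℝ) ≤ b1 ^ d := by
      have h := hS1card
      rw [Fintype.card_fin] at h
      have he : 1 + 2 * L / (ε / 2) = b1 := by
        rw [hb1def]
        field_simp
        ring
      rwa [he] at h
    have hS2' : (S2.card : ℝ) ≤ b2 ^ (d ^ 2) := by
      have h := hS2card
      have hc2 : Fintype.card (Fin d × Fin d) = d ^ 2 := by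
        simp [sq]
      rw [hc2] at h
      have he : 1 + 2 * (Real.sqrt d * B ^ 2 / lam) / (ε ^ 2 / 4) = b2 := by
        rw [hb2def]
        field_simp
        ring
      rwa [he] at h
    rcases Nat.eq_zero_or_pos C.card with h0 | hpos
    · rw [h0]
      push_cast
      rw [Real.log_zero]
      have g1 : 0 ≤ Real.log b1 := Real.log_nonneg hb1
      have g2 : 0 ≤ Real.log b2 := Real.log_nonneg hb2
      positivity
    · have hfinal : (C.card : ℝ) ≤ b1 ^ d * b2 ^ (d ^ 2) := by
        calc (C.card : ℝ) ≤ (S1.card : ℝ) * (S2.card : ℝ) := hcard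
          _ ≤ b1 ^ d * b2 ^ (d ^ 2) := by
              exact mul_le_mul hS1' hS2' (Nat.cast_nonneg _) (pow_nonneg (by linarith) _)
      calc Real.log (C.card : ℝ)
          ≤ Real.log (b1 ^ d * b2 ^ (d ^ 2)) := by
            apply Real.log_le_log (by exact_mod_cast hpos) hfinal
        _ = d * Real.log b1 + d ^ 2 * Real.log b2 := by
            rw [Real.log_mul (by positivity) (by positivity), Real.log_pow, Real.log_pow]
            push_cast
            ring
end

section
/- Consider a ζ-approximate linear MDP: for each step h there exist signed measures μ_h on the finite state set S and a vector θ_h ∈ ℝ^d with ‖φ(x,a)‖ ≤ 1, such that the total variation distance ‖P_h(·|x,a) − ⟨φ(x,a), μ_h(·)⟩‖_TV ≤ ζ and |r_h(x,a) − ⟨φ(x,a), θ_h⟩| ≤ ζ for all (x,a). Then for any policy π, setting w_h^π = θ_h + Σ_{x'} V_{h+1}^π(x') μ_h(x'), for all (x,a,h): |Q_h^π(x,a) − ⟨φ(x,a), w_h^π⟩| ≤ 2Hζ. -/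
/-!
Rewards lie in `[0, 1]` and transitions are probability vectors, so backward induction from
`V_{H+1} = 0` gives `0 ≤ V_{h+1}^π ≤ H`. Substituting the Bellman equation,
`Q_h^π(x,a) - ⟨φ(x,a), w_h^π⟩` splits into the reward error `r_h - ⟨φ, θ_h⟩`, of size at most `ζ`,
and the integral of `V_{h+1}^π` against the signed measure `P_h(·|x,a) - ⟨φ(x,a), μ_h(·)⟩`, of
size at most `Hζ` by the total variation bound. Finally `ζ + Hζ ≤ 2Hζ` as `H ≥ 1`.
-/

open Matrix Finset

lemma add_sum_mul_mem_Icc {ι : Type*} [Fintype ι] {p v : ι → ℝ} {r c : ℝ}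
    (hp : ∀ i, 0 ≤ p i) (hp1 : ∑ i, p i = 1) (hv : ∀ i, v i ∈ Set.Icc 0 c)
    (hr : r ∈ Set.Icc 0 1) :
    r + ∑ i, p i * v i ∈ Set.Icc 0 (c + 1) := by
  have hnonneg : 0 ≤ ∑ i, p i * v i :=
    sum_nonneg fun i _ => mul_nonneg (hp i) (hv i).1
  have hle : ∑ i, p i * v i ≤ c :=
    calc ∑ i, p i * v i ≤ ∑ i, p i * c :=
          sum_le_sum fun i _ => mul_le_mul_of_nonneg_left (hv i).2 (hp i)
      _ = c := by rw [← sum_mul, hp1, one_mul]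
  exact ⟨by linarith [hr.1], by linarith [hr.2]⟩

lemma abs_sum_sub_mul_le {ι : Type*} [Fintype ι] {p q v : ι → ℝ} {c : ℝ}
    (hv : ∀ i, |v i| ≤ c) :
    |∑ i, (p i - q i) * v i| ≤ (∑ i, |p i - q i|) * c :=
  calc |∑ i, (p i - q i) * v i| ≤ ∑ i, |(p i - q i) * v i| := abs_sum_le_sum_abs _ _
    _ ≤ ∑ i, |p i - q i| * c := sum_le_sum fun i _ => by
        rw [abs_mul]; exact mul_le_mul_of_nonneg_left (hv i) (abs_nonneg _)
    _ = (∑ i, |p i - q i|) * c := (sum_mul _ _ _).symm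

lemma value_mem_Icc_of_bellman {S A : Type*} [Fintype S] {H : ℕ} {π : S → ℕ → A}
    {P : ℕ → S → A → S → ℝ} {r : ℕ → S → A → ℝ} {Q : ℕ → S → A → ℝ} {V : ℕ → S → ℝ}
    (hPpos : ∀ h x a x', 0 ≤ P h x a x') (hPsum : ∀ h x a, ∑ x' : S, P h x a x' = 1)
    (hr01 : ∀ h x a, r h x a ∈ Set.Icc (0 : ℝ) 1)
    (hV : ∀ h x, V h x = Q h x (π x h)) (hQend : ∀ x a, Q (H + 1) x a = 0)
    (hBellman : ∀ h ∈ Icc 1 H, ∀ x a,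
      Q h x a = r h x a + ∑ x' : S, P h x a x' * V (h + 1) x') :
    ∀ k ≤ H, ∀ x, V (H + 1 - k) x ∈ Set.Icc 0 (k : ℝ) := by
  intro k
  induction k with
  | zero => intro _ x; simp [hV, hQend]
  | succ k ih =>
    intro hk x
    have hmem : H + 1 - (k + 1) ∈ Icc 1 H := mem_Icc.mpr ⟨by omega, by omega⟩
    have hnext : H + 1 - (k + 1) + 1 = H + 1 - k := by omega
    rw [hV, hBellman _ hmem, hnext, Nat.cast_succ]
    exact add_sum_mul_mem_Icc (hPpos _ _ _) (hPsum _ _ _) (ih (by omega)) (hr01 _ _ _)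

theorem stmt_18_general (S A : Type) [Fintype S] [Fintype A] (d H : ℕ)
    (ζ : ℝ)
    (φ : S → A → Fin d → ℝ)
    (μ : ℕ → S → Fin d → ℝ) (θ : ℕ → Fin d → ℝ)
    (P : ℕ → S → A → S → ℝ) (r : ℕ → S → A → ℝ)
    (hPpos : ∀ h x a x', 0 ≤ P h x a x')
    (hPsum : ∀ h x a, ∑ x' : S, P h x a x' = 1)
    (hPTV : ∀ h x a, ∑ x' : S, |P h x a x' - φ x a ⬝ᵥ μ h x'| ≤ ζ)
    (hrζ : ∀ h x a, |r h x a - φ x a ⬝ᵥ θ h| ≤ ζ)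
    (hr01 : ∀ h x a, r h x a ∈ Set.Icc (0 : ℝ) 1)
    (π : S → ℕ → A)
    (Q : ℕ → S → A → ℝ) (V : ℕ → S → ℝ)
    (hV : ∀ h x, V h x = Q h x (π x h))
    (hQend : ∀ x a, Q (H + 1) x a = 0)
    (hBellman : ∀ h ∈ Finset.Icc 1 H, ∀ x a,
      Q h x a = r h x a + ∑ x' : S, P h x a x' * V (h + 1) x')
    (w : ℕ → Fin d → ℝ)
    (hw : ∀ h, w h = θ h + ∑ x' : S, V (h + 1) x' • μ h x') :
    ∀ h ∈ Finset.Icc 1 H, ∀ x a, |Q h x a - φ x a ⬝ᵥ w h| ≤ 2 * H * ζ := by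
  intro h hh x a
  obtain ⟨h1, hH⟩ := mem_Icc.mp hh
  have hVbound : ∀ x', |V (h + 1) x'| ≤ H := fun x' => by
    have hVmem := value_mem_Icc_of_bellman hPpos hPsum hr01 hV hQend hBellman (H - h)
      (Nat.sub_le H h) x'
    rw [show H + 1 - (H - h) = h + 1 by omega] at hVmem
    rw [abs_of_nonneg hVmem.1]
    exact hVmem.2.trans (by exact_mod_cast Nat.sub_le H h)
  have hsplit : Q h x a - φ x a ⬝ᵥ w h = (r h x a - φ x a ⬝ᵥ θ h)
      + ∑ x', (P h x a x' - φ x a ⬝ᵥ μ h x') * V (h + 1) x' := by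
    simp only [hBellman h hh, hw, dotProduct_add, dotProduct_sum, dotProduct_smul, smul_eq_mul,
      sub_mul, sum_sub_distrib]
    simp only [mul_comm (V (h + 1) _)]
    ring
  have hmodel : |∑ x', (P h x a x' - φ x a ⬝ᵥ μ h x') * V (h + 1) x'| ≤ ζ * H :=
    (abs_sum_sub_mul_le hVbound).trans (mul_le_mul_of_nonneg_right (hPTV h x a) H.cast_nonneg)
  have hζ : 0 ≤ ζ := (abs_nonneg _).trans (hrζ h x a)
  have hH1 : (1 : ℝ) ≤ H := by exact_mod_cast h1.trans hH
  calc |Q h x a - φ x a ⬝ᵥ w h|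
      ≤ |r h x a - φ x a ⬝ᵥ θ h| + |∑ x', (P h x a x' - φ x a ⬝ᵥ μ h x') * V (h + 1) x'| := by
        rw [hsplit]; exact abs_add_le _ _
    _ ≤ ζ + ζ * H := add_le_add (hrζ h x a) hmodel
    _ ≤ 2 * H * ζ := by nlinarith

/-- In a ζ-approximate linear MDP, the action-value function of any policy is
2Hζ-close to the linear function with weights `w_h^π = θ_h + ∑_{x'} V_{h+1}^π(x') μ_h(x')`. -/
theorem stmt_18 (S A : Type) [Fintype S] [Fintype A] (d H : ℕ)
    (ζ : ℝ) (hζ0 : 0 ≤ ζ) (hζ1 : ζ ≤ 1)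
    (φ : S → A → Fin d → ℝ)
    (hφ : ∀ x a, Real.sqrt (φ x a ⬝ᵥ φ x a) ≤ 1)
    (μ : ℕ → S → Fin d → ℝ) (θ : ℕ → Fin d → ℝ)
    (P : ℕ → S → A → S → ℝ) (r : ℕ → S → A → ℝ)
    (hPpos : ∀ h x a x', 0 ≤ P h x a x')
    (hPsum : ∀ h x a, ∑ x' : S, P h x a x' = 1)
    (hPTV : ∀ h x a, ∑ x' : S, |P h x a x' - φ x a ⬝ᵥ μ h x'| ≤ ζ)
    (hrζ : ∀ h x a, |r h x a - φ x a ⬝ᵥ θ h| ≤ ζ)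
    (hr01 : ∀ h x a, r h x a ∈ Set.Icc (0 : ℝ) 1)
    (π : S → ℕ → A)
    (Q : ℕ → S → A → ℝ) (V : ℕ → S → ℝ)
    (hV : ∀ h x, V h x = Q h x (π x h))
    (hQend : ∀ x a, Q (H + 1) x a = 0)
    (hBellman : ∀ h ∈ Finset.Icc 1 H, ∀ x a,
      Q h x a = r h x a + ∑ x' : S, P h x a x' * V (h + 1) x')
    (w : ℕ → Fin d → ℝ)
    (hw : ∀ h, w h = θ h + ∑ x' : S, V (h + 1) x' • μ h x') :
    ∀ h ∈ Finset.Icc 1 H, ∀ x a, |Q h x a - φ x a ⬝ᵥ w h| ≤ 2 * H * ζ :=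
  stmt_18_general S A d H ζ φ μ θ P r hPpos hPsum hPTV hrζ hr01 π Q V hV hQend hBellman w hw
end
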